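/- Fix γ, ω ∈ ℝ and regard p^kag as a function of (x,ξ) ∈ ℝ², with values in M₃(ℂ). Let t̃₁(x,ξ) = (x+2π,ξ), t̃₂(x,ξ) = (x,ξ+2π), s(x,ξ) = (ξ,x), and ᵗκ(x,ξ) = (ξ,−x+ξ) (so ᵗκ²(x,ξ) = (−x+ξ,−x)). Let C ∈ M₃(ℂ) be the cyclic permutation matrix with rows (0,1,0),(0,0,1),(1,0,0), and S ∈ M₃(ℂ) the permutation matrix with rows (0,0,1),(0,1,0),(1,0,0). Then for all (x,ξ) ∈ ℝ²: (1) p^kag∘t̃₁ = p^kag; (2) p^kag∘t̃₂ = p^kag; (3) C⁻¹ · (p^kag∘ᵗκ²)(x,ξ) · C = p^kag(x,ξ); (4) S · conj((p^kag∘s)(x,ξ)) · S = p^kag(x,ξ), where conj denotes entrywise complex conjugation. -/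
import Mathlib


/- STATEMENT 14: symmetries of the kagome symbol `p^kag(x,ξ)`: invariance under the
translations `t̃₁(x,ξ) = (x+2π,ξ)`, `t̃₂(x,ξ) = (x,ξ+2π)`, conjugation-invariance under
`ᵗκ²(x,ξ) = (−x+ξ,−x)` by the cyclic permutation matrix `C`, and conjugation-invariance of
the entrywise complex conjugate under `s(x,ξ) = (ξ,x)` by the permutation matrix `S`. -/

open Complex Matrix

noncomputable section

/-- The kagome symbol `p^kag(x,ξ,γ,ω)`. -/
def pkag (γ ω x ξ : ℝ) : Matrix (Fin 3) (Fin 3) ℂ :=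
  !![0,
     Complex.exp (Complex.I * ((ω : ℂ) + (γ : ℂ)/8)) *
       (Complex.exp (-(Complex.I * (x : ℂ))) + Complex.exp (-(Complex.I * ((x : ℂ) - (ξ : ℂ))))),
     Complex.exp (-(Complex.I * ((ω : ℂ) + (γ : ℂ)/8))) *
       (Complex.exp (-(Complex.I * (x : ℂ))) + Complex.exp (-(Complex.I * (ξ : ℂ))));
     Complex.exp (-(Complex.I * ((ω : ℂ) + (γ : ℂ)/8))) *
       (Complex.exp (Complex.I * (x : ℂ)) + Complex.exp (Complex.I * ((x : ℂ) - (ξ : ℂ)))),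
     0,
     Complex.exp (Complex.I * ((ω : ℂ) + (γ : ℂ)/8)) *
       (Complex.exp (Complex.I * ((x : ℂ) - (ξ : ℂ))) + Complex.exp (-(Complex.I * (ξ : ℂ))));
     Complex.exp (Complex.I * ((ω : ℂ) + (γ : ℂ)/8)) *
       (Complex.exp (Complex.I * (x : ℂ)) + Complex.exp (Complex.I * (ξ : ℂ))),
     Complex.exp (-(Complex.I * ((ω : ℂ) + (γ : ℂ)/8))) *
       (Complex.exp (-(Complex.I * ((x : ℂ) - (ξ : ℂ)))) + Complex.exp (Complex.I * (ξ : ℂ))),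
     0]

/-- The cyclic permutation matrix `C` with rows `(0,1,0),(0,0,1),(1,0,0)`. -/
def Cmat : Matrix (Fin 3) (Fin 3) ℂ := !![0, 1, 0; 0, 0, 1; 1, 0, 0]

/-- The permutation matrix `S` with rows `(0,0,1),(0,1,0),(1,0,0)`. -/
def Smat : Matrix (Fin 3) (Fin 3) ℂ := !![0, 0, 1; 0, 1, 0; 1, 0, 0]

/-- Reformulation of `pkag` in terms of `c = e^{i(ω+γ/8)}`, `a = e^{ix}`, `b = e^{iξ}`. -/
def Fm (c a b : ℂ) : Matrix (Fin 3) (Fin 3) ℂ :=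
  !![0, c * (a⁻¹ + a⁻¹ * b), c⁻¹ * (a⁻¹ + b⁻¹);
     c⁻¹ * (a + a * b⁻¹), 0, c * (a * b⁻¹ + b⁻¹);
     c * (a + b), c⁻¹ * (a⁻¹ * b + b), 0]

lemma pkag_eq (γ ω x ξ : ℝ) :
    pkag γ ω x ξ = Fm (Complex.exp (Complex.I * ((ω : ℂ) + (γ : ℂ)/8)))
      (Complex.exp (Complex.I * (x : ℂ))) (Complex.exp (Complex.I * (ξ : ℂ))) := by
  ext i j
  fin_cases i <;> fin_cases j <;>
    simp only [pkag, Fm, Matrix.cons_val', Matrix.cons_val_zero, Matrix.cons_val_one,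
      Matrix.head_cons, Matrix.empty_val', Matrix.cons_val_fin_one, Matrix.head_fin_const,
      Matrix.cons_val_two, Matrix.tail_cons, ← Complex.exp_neg, ← Complex.exp_add] <;>
    ring_nf

lemma exp_shift (t : ℝ) :
    Complex.exp (Complex.I * ((t : ℝ) + 2 * Real.pi : ℝ)) =
      Complex.exp (Complex.I * (t : ℂ)) := by
  push_cast
  rw [mul_add, Complex.exp_add]
  rw [show Complex.I * (2 * (Real.pi : ℂ)) = 2 * Real.pi * Complex.I by ring,
    Complex.exp_two_pi_mul_I, mul_one]

lemma conj_exp (z : ℂ) (hz : (starRingEnd ℂ) z = z) :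
    (starRingEnd ℂ) (Complex.exp (Complex.I * z)) = (Complex.exp (Complex.I * z))⁻¹ := by
  rw [← Complex.exp_conj, ← Complex.exp_neg]
  congr 1
  simp [hz]

lemma step3 (c a b : ℂ) (ha : a ≠ 0) (hb : b ≠ 0) :
    Cmat⁻¹ * Fm c (a⁻¹ * b) a⁻¹ * Cmat = Fm c a b := by
  have hC : Cmat⁻¹ = !![0, 0, 1; 1, 0, 0; 0, 1, 0] := by
    apply Matrix.inv_eq_right_inv
    ext i j
    fin_cases i <;> fin_cases j <;>
      simp [Cmat, Matrix.mul_apply, Fin.sum_univ_three, Matrix.one_apply, Matrix.vecHead,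
        Matrix.vecTail]
  rw [hC, Fm, Fm, Cmat, Matrix.mul_fin_three, Matrix.mul_fin_three]
  ext i j
  fin_cases i <;> fin_cases j <;>
    simp [mul_assoc, inv_mul_cancel₀ ha, mul_inv_cancel₀ ha, inv_mul_cancel₀ hb,
      mul_inv_cancel₀ hb, mul_comm, mul_left_comm]
  all_goals try left
  all_goals (first
      | ring1
      | (rw [mul_inv_cancel₀ ha]; ring1)
      | (rw [mul_right_comm, mul_inv_cancel₀ ha]; ring1)
      | (rw [mul_inv_cancel₀ hb]; ring1)
      | (rw [mul_right_comm, mul_inv_cancel₀ hb]; ring1)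
      | (field_simp; try ring))

lemma map_conj_Fm (c a b : ℂ) (hc : (starRingEnd ℂ) c = c⁻¹)
    (ha : (starRingEnd ℂ) a = a⁻¹) (hb : (starRingEnd ℂ) b = b⁻¹) :
    (Fm c a b).map (starRingEnd ℂ) = Fm c⁻¹ a⁻¹ b⁻¹ := by
  ext i j
  fin_cases i <;> fin_cases j <;>
    simp [Fm, Matrix.map_apply, _root_.map_add, _root_.map_mul, map_inv₀, hc, ha, hb, Matrix.vecHead,
      Matrix.vecTail]

lemma step4 (c a b : ℂ) (ha : a ≠ 0) (hb : b ≠ 0) :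
    Smat * Fm c⁻¹ b⁻¹ a⁻¹ * Smat = Fm c a b := by
  rw [Fm, Fm, Smat, Matrix.mul_fin_three, Matrix.mul_fin_three]
  ext i j
  fin_cases i <;> fin_cases j
  all_goals try rfl
  all_goals try simp [mul_assoc, inv_mul_cancel₀ ha, mul_inv_cancel₀ ha, inv_mul_cancel₀ hb,
    mul_inv_cancel₀ hb, mul_comm, mul_left_comm]
  all_goals try left
  all_goals (first
      | ring1
      | (rw [mul_inv_cancel₀ ha]; ring1)
      | (rw [mul_right_comm, mul_inv_cancel₀ ha]; ring1)
      | (rw [mul_inv_cancel₀ hb]; ring1)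
      | (rw [mul_right_comm, mul_inv_cancel₀ hb]; ring1)
      | (field_simp; try ring))

theorem stmt14 (γ ω : ℝ) :
    -- (1) invariance under `t̃₁(x,ξ) = (x+2π,ξ)`
    (∀ x ξ : ℝ, pkag γ ω (x + 2 * Real.pi) ξ = pkag γ ω x ξ)
    -- (2) invariance under `t̃₂(x,ξ) = (x,ξ+2π)`
    ∧ (∀ x ξ : ℝ, pkag γ ω x (ξ + 2 * Real.pi) = pkag γ ω x ξ)
    -- (3) `C⁻¹ (p^kag ∘ ᵗκ²) C = p^kag`, where `ᵗκ²(x,ξ) = (−x+ξ,−x)`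
    ∧ (∀ x ξ : ℝ, Cmat⁻¹ * pkag γ ω (-x + ξ) (-x) * Cmat = pkag γ ω x ξ)
    -- (4) `S conj(p^kag ∘ s) S = p^kag`, where `s(x,ξ) = (ξ,x)`
    ∧ (∀ x ξ : ℝ, Smat * (pkag γ ω ξ x).map (starRingEnd ℂ) * Smat = pkag γ ω x ξ) := by
  refine ⟨fun x ξ => ?_, fun x ξ => ?_, fun x ξ => ?_, fun x ξ => ?_⟩
  · rw [pkag_eq, pkag_eq, exp_shift]
  · rw [pkag_eq, pkag_eq, exp_shift]
  · rw [pkag_eq, pkag_eq]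
    rw [show Complex.exp (Complex.I * ((-x + ξ : ℝ) : ℂ)) =
        (Complex.exp (Complex.I * (x : ℂ)))⁻¹ * Complex.exp (Complex.I * (ξ : ℂ)) by
      rw [← Complex.exp_neg, ← Complex.exp_add]; push_cast; ring_nf,
      show Complex.exp (Complex.I * ((-x : ℝ) : ℂ)) =
        (Complex.exp (Complex.I * (x : ℂ)))⁻¹ by
      rw [← Complex.exp_neg]; push_cast; ring_nf]
    exact step3 _ _ _ (Complex.exp_ne_zero _) (Complex.exp_ne_zero _)
  · rw [pkag_eq, pkag_eq,
      map_conj_Fm _ _ _ (conj_exp _ (by simp [map_ofNat])) (conj_exp _ (by simp [map_ofNat])) (conj_exp _ (by simp [map_ofNat]))]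
    exact step4 _ _ _ (Complex.exp_ne_zero _) (Complex.exp_ne_zero _)

end
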